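/- In the MAJSAT gadget built from a Boolean function φ on n ≥ 1 variables, the empty coordinate set is stochastically decisive if and only if at least half of all assignments satisfy φ, i.e., 2·|{s ∈ S : φ(s) = true}| ≥ 2^n. -/

import Mathlib

/-- Full-information optimizer: actions maximizing pointwise utility at state `s`. -/
def Opt {n : ℕ} {A : Type*} {X : Fin n → Type*}
    (U : A → (∀ i, X i) → ℝ) (s : ∀ i, X i) : Set A :=
  {a | ∀ b, U b s ≤ U a s}

/-- Conditional (unnormalized) expected utility of action `a` over the `I`-fiber of `s`. -/
noncomputable def condEU {n : ℕ} {A : Type*} {X : Fin n → Type*}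
    [∀ i, Fintype (X i)] [∀ i, DecidableEq (X i)]
    (U : A → (∀ i, X i) → ℝ) (P : (∀ i, X i) → ℝ)
    (I : Finset (Fin n)) (s : ∀ i, X i) (a : A) : ℝ :=
  ∑ t ∈ Finset.univ.filter (fun t : ∀ i, X i => ∀ i ∈ I, t i = s i), P t * U a t

/-- Conditional optimizer: actions maximizing conditional expected utility on the `I`-fiber. -/
noncomputable def OptS {n : ℕ} {A : Type*} {X : Fin n → Type*}
    [∀ i, Fintype (X i)] [∀ i, DecidableEq (X i)]
    (U : A → (∀ i, X i) → ℝ) (P : (∀ i, X i) → ℝ)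
    (I : Finset (Fin n)) (s : ∀ i, X i) : Set A :=
  {a | ∀ b, condEU U P I s b ≤ condEU U P I s a}

/-- `I` is statically sufficient: states agreeing on `I` have the same optimizer. -/
def StaticSufficient {n : ℕ} {A : Type*} {X : Fin n → Type*}
    (U : A → (∀ i, X i) → ℝ) (I : Finset (Fin n)) : Prop :=
  ∀ s t : ∀ i, X i, (∀ i ∈ I, s i = t i) → Opt U s = Opt U t

/-- `I` is stochastically sufficient: the conditional optimizer agrees with the
full-information optimizer at every state. -/
def StochSufficient {n : ℕ} {A : Type*} {X : Fin n → Type*}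
    [∀ i, Fintype (X i)] [∀ i, DecidableEq (X i)]
    (U : A → (∀ i, X i) → ℝ) (P : (∀ i, X i) → ℝ) (I : Finset (Fin n)) : Prop :=
  ∀ s : ∀ i, X i, OptS U P I s = Opt U s

/-- `I` is stochastically decisive: every positive-probability state's observed fiber
has a unique conditional optimal action. -/
def StochDecisive {n : ℕ} {A : Type*} {X : Fin n → Type*}
    [∀ i, Fintype (X i)] [∀ i, DecidableEq (X i)]
    (U : A → (∀ i, X i) → ℝ) (P : (∀ i, X i) → ℝ) (I : Finset (Fin n)) : Prop :=
  ∀ s : ∀ i, X i, 0 < P s → ∃ a : A, OptS U P I s = {a}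


/-- The three actions of the MAJSAT gadget. -/
inductive GAct : Type
  | accept : GAct
  | holdL : GAct
  | holdR : GAct
deriving DecidableEq

instance instFintypeGAct : Fintype GAct :=
  ⟨{GAct.accept, GAct.holdL, GAct.holdR}, fun x => by cases x <;> simp⟩

/-- Gadget utility: `accept` pays `1` on satisfying assignments and `0` otherwise;
both hold actions pay the constant `1/2 - 2^{-(n+1)}`. -/
noncomputable def gU (n : ℕ) (φ : (Fin n → Bool) → Bool) :
    GAct → (∀ _ : Fin n, Bool) → ℝ
  | GAct.accept, s => if φ s then 1 else 0
  | GAct.holdL, _ => 1 / 2 - 1 / 2 ^ (n + 1)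
  | GAct.holdR, _ => 1 / 2 - 1 / 2 ^ (n + 1)

/-- Uniform distribution on the Boolean cube. -/
noncomputable def gP (n : ℕ) : (∀ _ : Fin n, Bool) → ℝ := fun _ => 1 / 2 ^ n


/-! With nothing observed, every fiber is the whole cube, so the conditional optimizer is the
same argmax set at every state. The two hold actions always tie, so that set is a singleton exactly
when `accept` strictly beats them: `#sat / 2^n > 1/2 - 2^{-(n+1)}`. Multiplying by `2^(n+1)` gives
`2 · #sat > 2^n - 1`, which for integers is `2 · #sat ≥ 2^n`. -/

open Finset

section EmptyObservation

variable {n : ℕ} {A : Type*} {X : Fin n → Type*} [∀ i, Fintype (X i)] [∀ i, DecidableEq (X i)]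

lemma condEU_empty (U : A → (∀ i, X i) → ℝ) (P : (∀ i, X i) → ℝ) (s : ∀ i, X i) (a : A) :
    condEU U P ∅ s a = ∑ t, P t * U a t := by
  simp [condEU]

lemma stochDecisive_empty_iff (U : A → (∀ i, X i) → ℝ) (P : (∀ i, X i) → ℝ)
    (hP : ∃ s, 0 < P s) :
    StochDecisive U P ∅ ↔
      ∃ a, {a | ∀ b, ∑ t, P t * U b t ≤ ∑ t, P t * U a t} = {a} := by
  simp only [StochDecisive, OptS, condEU_empty]
  obtain ⟨s, hs⟩ := hP
  exact ⟨fun h => h s hs, fun h _ _ => h⟩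

end EmptyObservation

lemma gAct_argmax_eq_singleton_iff (v : GAct → ℝ) (hv : v .holdL = v .holdR) :
    (∃ a, {a | ∀ b, v b ≤ v a} = {a}) ↔ v .holdL < v .accept := by
  constructor
  · rintro ⟨a, ha⟩
    by_contra! hle
    have hoptL : ∀ c, v c ≤ v .holdL := by
      rintro (_ | _ | _)
      exacts [hle, le_rfl, hv.ge]
    have hL : GAct.holdL = a := by
      rw [← Set.mem_singleton_iff, ← ha]
      exact hoptL
    have hR : GAct.holdR = a := by
      rw [← Set.mem_singleton_iff, ← ha]
      exact fun c => hv ▸ hoptL c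
    exact GAct.noConfusion (hL.trans hR.symm)
  · intro hlt
    refine ⟨.accept, Set.ext fun b => ⟨fun hb => ?_, ?_⟩⟩
    · cases b with
      | accept => rfl
      | holdL => exact absurd (hb .accept) hlt.not_ge
      | holdR => exact absurd (hb .accept) (hv ▸ hlt.not_ge)
    · rintro rfl (_ | _ | _)
      exacts [le_rfl, hlt.le, hv ▸ hlt.le]

lemma half_sub_inv_two_pow_lt_div_iff (n K : ℕ) :
    (1 / 2 - 1 / 2 ^ (n + 1) : ℝ) < K / 2 ^ n ↔ 2 ^ n ≤ 2 * K := by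
  rw [show (1 / 2 - 1 / 2 ^ (n + 1) : ℝ) = (2 ^ n - 1) / 2 ^ (n + 1) by field_simp; ring,
    show (K / 2 ^ n : ℝ) = 2 * K / 2 ^ (n + 1) by field_simp; ring,
    div_lt_div_iff_of_pos_right (by positivity), sub_lt_iff_lt_add, ← Nat.lt_succ_iff]
  exact_mod_cast Iff.rfl

lemma sum_gP_mul_gU_accept (n : ℕ) (φ : (Fin n → Bool) → Bool) :
    ∑ t, gP n t * gU n φ .accept t = #{s | φ s = true} / 2 ^ n := by
  simp [gP, gU, sum_ite, div_eq_mul_inv]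

lemma sum_gP_mul_gU_holdL (n : ℕ) (φ : (Fin n → Bool) → Bool) :
    ∑ t, gP n t * gU n φ .holdL t = 1 / 2 - 1 / 2 ^ (n + 1) := by
  simp [gP, gU]

theorem majsat_gadget_decisiveness_general
    (n : ℕ) (φ : (Fin n → Bool) → Bool) :
    StochDecisive (X := fun _ : Fin n => Bool) (gU n φ) (gP n) (∅ : Finset (Fin n)) ↔
      2 ^ n ≤ 2 * (Finset.univ.filter fun s : Fin n → Bool => φ s = true).card := by
  rw [stochDecisive_empty_iff _ _ ⟨fun _ => false, by simp [gP]⟩,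
    gAct_argmax_eq_singleton_iff _ rfl, sum_gP_mul_gU_holdL, sum_gP_mul_gU_accept,
    half_sub_inv_two_pow_lt_div_iff]

theorem majsat_gadget_decisiveness
    (n : ℕ) (hn : 1 ≤ n) (φ : (Fin n → Bool) → Bool) :
    StochDecisive (X := fun _ : Fin n => Bool) (gU n φ) (gP n) (∅ : Finset (Fin n)) ↔
      2 ^ n ≤ 2 * (Finset.univ.filter fun s : Fin n → Bool => φ s = true).card :=
  majsat_gadget_decisiveness_general n φ
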